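/- Let X and Y be real Hilbert spaces, Φ₀ ∈ X, ρ > 0, 0 ≤ η < 1/2, and let P : X → Y be Fréchet differentiable at every point of the closed ball B = {Φ : ‖Φ − Φ₀‖ ≤ 2ρ}, with ‖P'(Φ)‖ ≤ 1 on B and the tangential cone condition ‖P(Φ) − P(Φ̃) − P'(Φ)(Φ − Φ̃)‖ ≤ η‖P(Φ) − P(Φ̃)‖ for all Φ, Φ̃ ∈ B. Let s ∈ Y with a solution Φ_* ∈ B_ρ(Φ₀) of P(Φ) = s, let δ > 0, let s^δ ∈ Y with ‖s^δ − s‖ ≤ δ, and let τ > 2(1+η)/(1−2η). Define Φ_{k+1}^δ = Φ_k^δ + P'(Φ_k^δ)*(s^δ − P(Φ_k^δ)) with Φ_0^δ = Φ₀. Then there exists a finite index k with ‖s^δ − P(Φ_k^δ)‖ ≤ τδ; i.e., the discrepancy principle determines a finite stopping index k_*(δ, s^δ). -/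

import Mathlib

/-!
Let `e_k = Φ_k − Φ_*` and `r_k = s^δ − P(Φ_k)`. Expanding the square of the Landweber update and
using `‖P'‖ ≤ 1`, the tangential cone condition between `Φ_k` and `Φ_*`, and `‖s^δ − P(Φ_*)‖ ≤ δ`
gives `‖e_{k+1}‖² ≤ ‖e_k‖² − (1 − 2η)‖r_k‖² + 2(1 + η)δ‖r_k‖`. The decrease
`(1 − 2η)t² − 2(1 + η)δt` is increasing in `t = ‖r_k‖` beyond `τδ`, so while `‖r_k‖ > τδ` the
squared error drops by at least the fixed amount `((1 − 2η)τ − 2(1 + η))τδ² > 0`, which keeps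
the iterates in the ball where the assumptions hold. Since `‖e_0‖ ≤ ρ`, this can happen only
finitely often.
-/

open ContinuousLinearMap
open scoped RealInnerProductSpace

section Landweber

variable {X Y : Type*} [NormedAddCommGroup X] [InnerProductSpace ℝ X] [CompleteSpace X]
    [NormedAddCommGroup Y] [InnerProductSpace ℝ Y] [CompleteSpace Y]

lemma norm_add_adjoint_apply_sq_le {A : X →L[ℝ] Y} (hA : ‖A‖ ≤ 1) (e : X) (r : Y) :
    ‖e + adjoint A r‖ ^ 2 ≤ ‖e‖ ^ 2 + 2 * ⟪A e, r⟫ + ‖r‖ ^ 2 := by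
  have h : ‖adjoint A r‖ ≤ ‖r‖ := by
    refine ((adjoint A).le_opNorm r).trans ?_
    rw [LinearIsometryEquiv.norm_map]
    exact mul_le_of_le_one_left (norm_nonneg r) hA
  rw [norm_add_sq_real, adjoint_inner_right]
  gcongr

lemma landweber_step_error_sq_le {P : X → Y} {A : X →L[ℝ] Y} (hA : ‖A‖ ≤ 1) {η δ : ℝ}
    (hη : 0 ≤ η) {Φ Φstar : X} {sδ : Y} (hnoise : ‖sδ - P Φstar‖ ≤ δ)
    (hcone : ‖P Φ - P Φstar - A (Φ - Φstar)‖ ≤ η * ‖P Φ - P Φstar‖) :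
    ‖Φ + adjoint A (sδ - P Φ) - Φstar‖ ^ 2 ≤
      ‖Φ - Φstar‖ ^ 2 - (1 - 2 * η) * ‖sδ - P Φ‖ ^ 2 + 2 * (1 + η) * δ * ‖sδ - P Φ‖ := by
  set r := sδ - P Φ
  set d := sδ - P Φstar
  set w := P Φ - P Φstar - A (Φ - Φstar)
  have hAe : A (Φ - Φstar) = d - r - w := by simp only [r, d, w]; abel
  have hres : ‖P Φ - P Φstar‖ ≤ ‖r‖ + δ :=
    calc ‖P Φ - P Φstar‖ = ‖d - r‖ := by simp only [r, d]; abel_nf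
      _ ≤ ‖d‖ + ‖r‖ := norm_sub_le _ _
      _ ≤ ‖r‖ + δ := by linarith
  have hdr : ⟪d, r⟫ ≤ δ * ‖r‖ :=
    (real_inner_le_norm d r).trans (mul_le_mul_of_nonneg_right hnoise (norm_nonneg r))
  have hwr : -⟪w, r⟫ ≤ η * (‖r‖ + δ) * ‖r‖ :=
    (neg_le_abs _).trans <| (abs_real_inner_le_norm w r).trans <|
      mul_le_mul_of_nonneg_right (hcone.trans (mul_le_mul_of_nonneg_left hres hη)) (norm_nonneg r)
  calc ‖Φ + adjoint A r - Φstar‖ ^ 2 = ‖(Φ - Φstar) + adjoint A r‖ ^ 2 := by abel_nf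
    _ ≤ ‖Φ - Φstar‖ ^ 2 + 2 * ⟪A (Φ - Φstar), r⟫ + ‖r‖ ^ 2 :=
      norm_add_adjoint_apply_sq_le hA _ _
    _ = ‖Φ - Φstar‖ ^ 2 + 2 * (⟪d, r⟫ - ‖r‖ ^ 2 - ⟪w, r⟫) + ‖r‖ ^ 2 := by
      rw [hAe, inner_sub_left, inner_sub_left, real_inner_self_eq_norm_sq]
    _ ≤ _ := by linarith

end Landweber

lemma quadratic_sub_ge_of_le {a b τ δ t : ℝ} (ha : 0 ≤ a) (hb : 0 ≤ b) (hab : b ≤ a * τ)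
    (hδ : 0 ≤ δ) (ht : τ * δ ≤ t) :
    (a * τ - b) * τ * δ ^ 2 ≤ a * t ^ 2 - b * δ * t := by
  have hfactor : a * t ^ 2 - b * δ * t - (a * τ - b) * τ * δ ^ 2 =
      (t - τ * δ) * (a * (t - τ * δ) + (2 * (a * τ) - b) * δ) := by ring
  have hpos : 0 ≤ a * (t - τ * δ) + (2 * (a * τ) - b) * δ :=
    add_nonneg (mul_nonneg ha (sub_nonneg.2 ht)) (mul_nonneg (by linarith) hδ)
  rw [← sub_nonneg, hfactor]
  exact mul_nonneg (sub_nonneg.2 ht) hpos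

lemma exists_of_sq_decrease {e : ℕ → ℝ} {p : ℕ → Prop} {ρ c : ℝ} (hc : 0 < c)
    (he : ∀ k, 0 ≤ e k) (h0 : e 0 ≤ ρ)
    (hstep : ∀ k, e k ≤ ρ → ¬ p k → e (k + 1) ^ 2 ≤ e k ^ 2 - c) : ∃ k, p k := by
  by_contra! hp
  have hρ : 0 ≤ ρ := (he 0).trans h0
  have hbound : ∀ k : ℕ, e k ^ 2 ≤ ρ ^ 2 - k * c := by
    intro k
    induction k with
    | zero => simpa using pow_le_pow_left₀ (he 0) h0 2
    | succ k ih =>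
      have hk : e k ≤ ρ :=
        (pow_le_pow_iff_left₀ (he k) hρ two_ne_zero).1 (ih.trans (by nlinarith [hc.le]))
      push_cast
      linarith [hstep k hk (hp k)]
  obtain ⟨k, hk⟩ := exists_nat_gt (ρ ^ 2 / c)
  rw [div_lt_iff₀ hc] at hk
  nlinarith [hbound k, sq_nonneg (e k)]

theorem stmt_13_general {X Y : Type*} [NormedAddCommGroup X] [InnerProductSpace ℝ X] [CompleteSpace X]
    [NormedAddCommGroup Y] [InnerProductSpace ℝ Y] [CompleteSpace Y]
    (P : X → Y) (P' : X → X →L[ℝ] Y) (Φ₀ : X) (ρ η : ℝ)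
    (hη0 : 0 ≤ η) (hη : η < 1 / 2)
    (hscale : ∀ Φ, ‖Φ - Φ₀‖ ≤ 2 * ρ → ‖P' Φ‖ ≤ 1)
    (hcone : ∀ Φ Φ', ‖Φ - Φ₀‖ ≤ 2 * ρ → ‖Φ' - Φ₀‖ ≤ 2 * ρ →
      ‖P Φ - P Φ' - P' Φ (Φ - Φ')‖ ≤ η * ‖P Φ - P Φ'‖)
    (s : Y) (Φstar : X) (hstar : ‖Φstar - Φ₀‖ ≤ ρ) (hsol : P Φstar = s)
    (δ : ℝ) (hδ : 0 < δ) (sδ : Y) (hnoise : ‖sδ - s‖ ≤ δ)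
    (τ : ℝ) (hτ : 2 * (1 + η) / (1 - 2 * η) < τ)
    (Φ : ℕ → X) (hΦ0 : Φ 0 = Φ₀)
    (hiter : ∀ k, Φ (k + 1) = Φ k + ContinuousLinearMap.adjoint (P' (Φ k)) (sδ - P (Φ k))) :
    ∃ k : ℕ, ‖sδ - P (Φ k)‖ ≤ τ * δ := by
  have h2η : 0 < 1 - 2 * η := by linarith
  have hτ0 : 0 < τ := (div_pos (by linarith) h2η).trans hτ
  have hgap : 2 * (1 + η) < (1 - 2 * η) * τ := by rwa [div_lt_iff₀' h2η] at hτ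
  refine exists_of_sq_decrease (e := fun k ↦ ‖Φ k - Φstar‖) (ρ := ρ)
    (c := ((1 - 2 * η) * τ - 2 * (1 + η)) * τ * δ ^ 2)
    (by have := sub_pos.2 hgap; positivity) (fun _ ↦ norm_nonneg _)
    (by rwa [hΦ0, norm_sub_rev]) fun k hk hres ↦ ?_
  have hball : ‖Φ k - Φ₀‖ ≤ 2 * ρ := by
    linarith [norm_sub_le_norm_sub_add_norm_sub (Φ k) Φstar Φ₀]
  have hstep := landweber_step_error_sq_le (hscale _ hball) hη0 (hsol ▸ hnoise)
    (hcone _ _ hball (by linarith [norm_nonneg (Φstar - Φ₀)]))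
  have hquad := quadratic_sub_ge_of_le h2η.le (by linarith) hgap.le hδ.le (not_le.1 hres).le
  simp only [hiter k]
  linarith

/-- Finiteness of the discrepancy-principle stopping index for the non-linear Landweber
iteration with noisy data `‖s^δ − s‖ ≤ δ`, `δ > 0`, and `τ > 2(1+η)/(1−2η)`: there is a
finite index `k` with `‖s^δ − P(Φ_k^δ)‖ ≤ τδ`. -/
theorem stmt_13 {X Y : Type*} [NormedAddCommGroup X] [InnerProductSpace ℝ X] [CompleteSpace X]
    [NormedAddCommGroup Y] [InnerProductSpace ℝ Y] [CompleteSpace Y]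
    (P : X → Y) (P' : X → X →L[ℝ] Y) (Φ₀ : X) (ρ η : ℝ)
    (hρ : 0 < ρ) (hη0 : 0 ≤ η) (hη : η < 1 / 2)
    (hdiff : ∀ Φ, ‖Φ - Φ₀‖ ≤ 2 * ρ → HasFDerivAt P (P' Φ) Φ)
    (hscale : ∀ Φ, ‖Φ - Φ₀‖ ≤ 2 * ρ → ‖P' Φ‖ ≤ 1)
    (hcone : ∀ Φ Φ', ‖Φ - Φ₀‖ ≤ 2 * ρ → ‖Φ' - Φ₀‖ ≤ 2 * ρ →
      ‖P Φ - P Φ' - P' Φ (Φ - Φ')‖ ≤ η * ‖P Φ - P Φ'‖)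
    (s : Y) (Φstar : X) (hstar : ‖Φstar - Φ₀‖ ≤ ρ) (hsol : P Φstar = s)
    (δ : ℝ) (hδ : 0 < δ) (sδ : Y) (hnoise : ‖sδ - s‖ ≤ δ)
    (τ : ℝ) (hτ : 2 * (1 + η) / (1 - 2 * η) < τ)
    (Φ : ℕ → X) (hΦ0 : Φ 0 = Φ₀)
    (hiter : ∀ k, Φ (k + 1) = Φ k + ContinuousLinearMap.adjoint (P' (Φ k)) (sδ - P (Φ k))) :
    ∃ k : ℕ, ‖sδ - P (Φ k)‖ ≤ τ * δ :=
  stmt_13_general P P' Φ₀ ρ η hη0 hη hscale hcone s Φstar hstar hsol δ hδ sδ hnoise τ hτ Φ hΦ0 hiter
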